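/- Suppose the average log-likelihood ratio statistics satisfy: under P0, Λ_n/n → −I0 a.s.; and the fixed-sample-size test uses threshold c*(α,β) and sample size n*(α,β) with P0(T_{n*} > c*) ≤ α where T_n = Λ_n/n. If n*(α,β) → ∞ as α∧β → 0, then liminf c*(α,β) ≥ −I0 as α∧β → 0 (with α bounded away from 1). Symmetrically, if under P1, Λ_n/n → I1 a.s., then limsup c*(α,β) ≤ I1. -/

import Mathlib

/-!
Almost-sure convergence `T n → L` forces `P (T n ∈ s) → 1` for every neighbourhood `s` of `L`.
If the threshold `c*` dropped below `-I0 - ε` along `n* → ∞`, the rejection region `{T_{n*} > c*}`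
would contain `{T_{n*} > -I0 - ε}`, whose `P0`-probability tends to `1`, contradicting the type I
error bound `α ≤ a < 1`. The upper bound on `c*` is the same argument under `P1` for the
acceptance region `{T_{n*} ≤ c*}` and the type II error bound `β ≤ b < 1`.
-/

open MeasureTheory Filter Set Topology

section

variable {Ω : Type*} [MeasurableSpace Ω] {T : ℕ → Ω → ℝ} {L : ℝ}

lemma tendsto_measure_preimage_of_ae_tendsto (μ : Measure Ω) [IsFiniteMeasure μ]
    (hT : ∀ n, Measurable (T n)) (hL : ∀ᵐ ω ∂μ, Tendsto (T · ω) atTop (𝓝 L))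
    {s : Set ℝ} (hs : s ∈ 𝓝 L) (hsm : MeasurableSet s) :
    Tendsto (fun n => μ (T n ⁻¹' s)) atTop (𝓝 (μ univ)) := by
  refine tendsto_measure_of_ae_tendsto_indicator_of_isFiniteMeasure atTop MeasurableSet.univ
    (fun n => hT n hsm) ?_
  filter_upwards [hL] with ω hω
  filter_upwards [hω hs] with n hn
  simpa using hn

lemma eventually_not_subset_of_ae_tendsto {ι : Type*} {l : Filter ι} (P : Measure Ω)
    [IsProbabilityMeasure P] (hT : ∀ n, Measurable (T n))
    (hL : ∀ᵐ ω ∂P, Tendsto (T · ω) atTop (𝓝 L)) {n : ι → ℕ} (hn : Tendsto n l atTop)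
    {S : ι → Set ℝ} {a : ℝ} (ha : a < 1) (hS : ∀ᶠ i in l, (P (T (n i) ⁻¹' S i)).toReal ≤ a)
    {s : Set ℝ} (hs : s ∈ 𝓝 L) (hsm : MeasurableSet s) :
    ∀ᶠ i in l, ¬ s ⊆ S i := by
  have hlim : Tendsto (fun m => (P (T m ⁻¹' s)).toReal) atTop (𝓝 1) := by
    simpa [Function.comp_def] using (ENNReal.tendsto_toReal (measure_ne_top P univ)).comp
      (tendsto_measure_preimage_of_ae_tendsto P hT hL hs hsm)
  filter_upwards [hn.eventually (hlim.eventually (eventually_gt_nhds ha)), hS]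
    with i hlarge hsmall hsub
  have hmono : (P (T (n i) ⁻¹' s)).toReal ≤ (P (T (n i) ⁻¹' S i)).toReal :=
    ENNReal.toReal_mono (measure_ne_top _ _) (measure_mono (preimage_mono hsub))
  linarith

end

theorem stmt15_general {Ω : Type*} [MeasurableSpace Ω] (P0 P1 : Measure Ω)
    [IsProbabilityMeasure P0] [IsProbabilityMeasure P1]
    (T : ℕ → Ω → ℝ) (hTmeas : ∀ n, Measurable (T n))
    (I0 I1 : ℝ)
    (nstar : ℝ → ℝ → ℕ) (cstar : ℝ → ℝ → ℝ)
    (has0 : ∀ᵐ ω ∂P0, Tendsto (fun n => T n ω) atTop (nhds (-I0)))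
    (has1 : ∀ᵐ ω ∂P1, Tendsto (fun n => T n ω) atTop (nhds I1))
    (herr0 : ∀ a b : ℝ, a ∈ Ioo (0 : ℝ) 1 → b ∈ Ioo (0 : ℝ) 1 →
      (P0 {ω | cstar a b < T (nstar a b) ω}).toReal ≤ a)
    (herr1 : ∀ a b : ℝ, a ∈ Ioo (0 : ℝ) 1 → b ∈ Ioo (0 : ℝ) 1 →
      (P1 {ω | T (nstar a b) ω ≤ cstar a b}).toReal ≤ b)
    (α β : ℕ → ℝ) (hαm : ∀ k, α k ∈ Ioo (0 : ℝ) 1) (hβm : ∀ k, β k ∈ Ioo (0 : ℝ) 1)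
    (ha : ∃ a < (1 : ℝ), ∀ k, α k ≤ a) (hb : ∃ b < (1 : ℝ), ∀ k, β k ≤ b)
    (hn : Tendsto (fun k => nstar (α k) (β k)) atTop atTop) :
    ∀ ε > (0 : ℝ),
      (∀ᶠ k in atTop, -I0 - ε < cstar (α k) (β k)) ∧
      (∀ᶠ k in atTop, cstar (α k) (β k) < I1 + ε) := by
  intro ε hε
  obtain ⟨a, ha1, hαa⟩ := ha
  obtain ⟨b, hb1, hβb⟩ := hb
  constructor
  · have hreject := eventually_not_subset_of_ae_tendsto P0 hTmeas has0 hn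
      (S := fun k => Ioi (cstar (α k) (β k))) ha1
      (Eventually.of_forall fun k => (herr0 _ _ (hαm k) (hβm k)).trans (hαa k))
      (Ioi_mem_nhds (by linarith : -I0 - ε < -I0)) measurableSet_Ioi
    filter_upwards [hreject] with k hk
    simpa [Ioi_subset_Ioi_iff] using hk
  · have haccept := eventually_not_subset_of_ae_tendsto P1 hTmeas has1 hn
      (S := fun k => Iic (cstar (α k) (β k))) hb1
      (Eventually.of_forall fun k => (herr1 _ _ (hαm k) (hβm k)).trans (hβb k))
      (Iio_mem_nhds (by linarith : I1 < I1 + ε)) measurableSet_Iio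
    filter_upwards [haccept] with k hk
    simpa [Iio_subset_Iic_iff] using hk

/-- Suppose `T n = Λ_n/n → -I0` a.s. under `P0` and `T n → I1` a.s. under `P1`,
and the fixed-sample-size test with sample size `n*(α,β)` and threshold `c*(α,β)` satisfies
`P0 (T_{n*} > c*) ≤ α` and `P1 (T_{n*} ≤ c*) ≤ β`. Then along any sequence `(α k, β k)` in
`(0,1)²` with `α k ∧ β k → 0`, `α` and `β` bounded away from `1`, and `n*(α k, β k) → ∞`, one has
`liminf c*(α k, β k) ≥ -I0` and `limsup c*(α k, β k) ≤ I1` (in ε-form). -/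
theorem stmt15 {Ω : Type*} [MeasurableSpace Ω] (P0 P1 : Measure Ω)
    [IsProbabilityMeasure P0] [IsProbabilityMeasure P1]
    (T : ℕ → Ω → ℝ) (hTmeas : ∀ n, Measurable (T n))
    (I0 I1 : ℝ) (hI0 : 0 < I0) (hI1 : 0 < I1)
    (nstar : ℝ → ℝ → ℕ) (cstar : ℝ → ℝ → ℝ)
    (has0 : ∀ᵐ ω ∂P0, Tendsto (fun n => T n ω) atTop (nhds (-I0)))
    (has1 : ∀ᵐ ω ∂P1, Tendsto (fun n => T n ω) atTop (nhds I1))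
    (herr0 : ∀ a b : ℝ, a ∈ Ioo (0 : ℝ) 1 → b ∈ Ioo (0 : ℝ) 1 →
      (P0 {ω | cstar a b < T (nstar a b) ω}).toReal ≤ a)
    (herr1 : ∀ a b : ℝ, a ∈ Ioo (0 : ℝ) 1 → b ∈ Ioo (0 : ℝ) 1 →
      (P1 {ω | T (nstar a b) ω ≤ cstar a b}).toReal ≤ b)
    (α β : ℕ → ℝ) (hαm : ∀ k, α k ∈ Ioo (0 : ℝ) 1) (hβm : ∀ k, β k ∈ Ioo (0 : ℝ) 1)
    (hmin : Tendsto (fun k => min (α k) (β k)) atTop (nhds 0))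
    (ha : ∃ a < (1 : ℝ), ∀ k, α k ≤ a) (hb : ∃ b < (1 : ℝ), ∀ k, β k ≤ b)
    (hn : Tendsto (fun k => nstar (α k) (β k)) atTop atTop) :
    ∀ ε > (0 : ℝ),
      (∀ᶠ k in atTop, -I0 - ε < cstar (α k) (β k)) ∧
      (∀ᶠ k in atTop, cstar (α k) (β k) < I1 + ε) :=
  stmt15_general P0 P1 T hTmeas I0 I1 nstar cstar has0 has1 herr0 herr1 α β hαm hβm ha hb hn
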